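/- Let X ⊆ ℝ^d be nonempty, let f : ℝ^d → ℝ^m be continuous, and let k, m ≥ 1. Let P be a Borel probability measure on ℝ^{k×m} with topological support 𝒲, and for each W ∈ 𝒲 let μ_W be a Borel probability measure on ℝ^d with topological support equal to X. Let η ↦ ν_η (η ∈ ℝ^k) be a KL-identifiable family of probability measures, with all KL integrands below assumed measurable and integrable. Assume (A4): there exist x^(1),…,x^(m) ∈ X with [f(x^(1)) ⋯ f(x^(m))] invertible; (A5): there exist W^(1),…,W^(m) ∈ 𝒲 and indices i_1,…,i_m ∈ {1,…,k} with rows W^(1)_{i_1,:},…,W^(m)_{i_m,:} linearly independent; (A6): for every S ⊆ {1,…,m} with P[colsupp(W) = S] > 0 and every nonzero a ∈ ℝ^m with supp(a) ⊆ S, P[{W : W a = 0} ∩ {colsupp(W) = S}] = 0; (A7): for every j, the union of all sets S with P[colsupp(W) = S] > 0 and j ∉ S equals {1,…,m} \ {j}. For continuous g : ℝ^d → ℝ^m define R_g(W̃, W) := ∫ klDiv(ν_{W f(x)}, ν_{W̃ g(x)}) dμ_W(x); call a pair (g, V) with V : 𝒲 → ℝ^{k×m} feasible if for every W ∈ 𝒲,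 V(W) minimizes R_g(·, W) over all of ℝ^{k×m}, and additionally ∫ ‖V(W)‖_{2,0} dP(W) ≤ ∫ ‖W‖_{2,0} dP(W). If (f̂, Ŵ) is a feasible pair with f̂ continuous whose outer value J(f̂, Ŵ) := ∫ R_{f̂}(Ŵ(W), W) dP(W) is no larger than J(g, V) for every feasible pair (g, V), then there exist a permutation matrix Π ∈ ℝ^{m×m} and an invertible diagonal matrix D ∈ ℝ^{m×m} such that f̂(x) = D Π f(x) for all x ∈ X. -/

import Mathlib

open MeasureTheory
open scoped ENNReal BigOperators

noncomputable section

/-- Matrices over `ℝ` carry the Borel σ-algebra of their (product) topology. -/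
instance matrixMeasurableSpace {k m : ℕ} :
    MeasurableSpace (Matrix (Fin k) (Fin m) ℝ) := borel _

instance matrixBorelSpace {k m : ℕ} : BorelSpace (Matrix (Fin k) (Fin m) ℝ) := ⟨rfl⟩

/-- The topological support of a measure: the points all of whose open neighbourhoods
have positive measure. -/
def msupport {α : Type*} [TopologicalSpace α] [MeasurableSpace α]
    (P : Measure α) : Set α :=
  {x | ∀ U : Set α, IsOpen U → x ∈ U → 0 < P U}

/-- The column support of a matrix: indices of its nonzero columns. -/
def colSupp {k m : ℕ} (W : Matrix (Fin k) (Fin m) ℝ) : Set (Fin m) :=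
  {j | ∃ i, W i j ≠ 0}

/-- The column sparsity `‖A‖_{2,0}`: the number of nonzero columns. -/
def colSparsity {k m : ℕ} (W : Matrix (Fin k) (Fin m) ℝ) : ℕ :=
  (colSupp W).ncard

/-- A matrix is a permutation matrix if it is obtained from a permutation `σ`
by putting a `1` in entry `(i, σ i)` and `0` elsewhere. -/
def IsPermMatrix {m : ℕ} (P : Matrix (Fin m) (Fin m) ℝ) : Prop :=
  ∃ σ : Equiv.Perm (Fin m), P = Matrix.of fun i j => if σ i = j then (1 : ℝ) else 0

variable {d k m : ℕ} {Y : Type*} [MeasurableSpace Y]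

/-- The inner population risk
`R_g(W̃, W) = ∫ klDiv (ν (W f x)) (ν (W̃ g x)) dμ_W(x)`. -/
def innerRisk (klDiv : Measure Y → Measure Y → ℝ≥0∞)
    (ν : (Fin k → ℝ) → Measure Y)
    (μ : Matrix (Fin k) (Fin m) ℝ → Measure (Fin d → ℝ))
    (f g : (Fin d → ℝ) → Fin m → ℝ)
    (Wt W : Matrix (Fin k) (Fin m) ℝ) : ℝ≥0∞ :=
  ∫⁻ x, klDiv (ν (W.mulVec (f x))) (ν (Wt.mulVec (g x))) ∂(μ W)

/-- A pair `(g, V)` is feasible for the bi-level problem with the sparsity constraint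
imposed only in expectation over tasks: `g` is continuous, for every task `W` in the
support of `P` the matrix `V W` minimizes `R_g(·, W)` over all of `ℝ^{k×m}`, and
`∫ ‖V W‖_{2,0} dP(W) ≤ ∫ ‖W‖_{2,0} dP(W)`. -/
def FeasibleExpected (klDiv : Measure Y → Measure Y → ℝ≥0∞)
    (ν : (Fin k → ℝ) → Measure Y)
    (μ : Matrix (Fin k) (Fin m) ℝ → Measure (Fin d → ℝ))
    (f : (Fin d → ℝ) → Fin m → ℝ)
    (P : Measure (Matrix (Fin k) (Fin m) ℝ))
    (g : (Fin d → ℝ) → Fin m → ℝ)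
    (V : Matrix (Fin k) (Fin m) ℝ → Matrix (Fin k) (Fin m) ℝ) : Prop :=
  Continuous g ∧
  (∀ W ∈ msupport P, ∀ Wt : Matrix (Fin k) (Fin m) ℝ,
      innerRisk klDiv ν μ f g (V W) W ≤ innerRisk klDiv ν μ f g Wt W) ∧
  (∫⁻ W, (colSparsity (V W) : ℝ≥0∞) ∂P) ≤ ∫⁻ W, (colSparsity W : ℝ≥0∞) ∂P

/-- The outer objective `J(g, V) = ∫ R_g(V W, W) dP(W)`. -/
def outerObj (klDiv : Measure Y → Measure Y → ℝ≥0∞)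
    (ν : (Fin k → ℝ) → Measure Y)
    (μ : Matrix (Fin k) (Fin m) ℝ → Measure (Fin d → ℝ))
    (f : (Fin d → ℝ) → Fin m → ℝ)
    (P : Measure (Matrix (Fin k) (Fin m) ℝ))
    (g : (Fin d → ℝ) → Fin m → ℝ)
    (V : Matrix (Fin k) (Fin m) ℝ → Matrix (Fin k) (Fin m) ℝ) : ℝ≥0∞ :=
  ∫⁻ W, innerRisk klDiv ν μ f g (V W) W ∂P

/-!
The pair `(f, id)` is feasible with outer value `0`, so the optimal pair has outer value `0`;
by KL-identifiability, continuity and the support assumptions, almost every task satisfies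
`W f = Ŵ(W) f̂` on `X`. At the points of (A4) this reads `W = Ŵ(W) M` with `M = G F⁻¹`, and the
rows of (A5), which lie in the support of `P`, force `M` to be invertible and `f̂ = M f` on `X`.
Hence `Ŵ(W) = W B` with `B = M⁻¹`. By (A6), almost surely every column of `W B` met by a row of `B`
indexed by `colsupp W` is nonzero; for invertible `B` these columns are at least as many as
`colsupp W`. The expected sparsity constraint turns this into an equality on every support class
of positive probability, equality survives unions, and (A7) then says that for each `j` some
column of `B` meets row `j` only. So `B`, and with it `M`, is a scaled permutation matrix.
-/

open Matrix

instance Matrix.instSecondCountableTopology {ι κ R : Type*} [Countable ι] [Countable κ]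
    [TopologicalSpace R] [SecondCountableTopology R] :
    SecondCountableTopology (Matrix ι κ R) :=
  inferInstanceAs (SecondCountableTopology (ι → κ → R))

section Support

variable {α : Type*} [TopologicalSpace α] [MeasurableSpace α]

theorem msupport_eq_support (P : Measure α) : msupport P = P.support := by
  rw [Measure.support_eq_forall_isOpen]
  ext x
  exact forall_congr' fun _ => Imp.swap

theorem ae_mem_msupport [HereditarilyLindelofSpace α] (P : Measure α) :
    ∀ᵐ x ∂P, x ∈ msupport P := by
  rw [msupport_eq_support]
  exact Measure.support_mem_ae

theorem forall_mem_msupport_of_ae {P : Measure α} {p : α → Prop} (hp : IsClosed {x | p x})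
    (h : ∀ᵐ x ∂P, p x) : ∀ x ∈ msupport P, p x := by
  rw [msupport_eq_support]
  exact Measure.support_subset_of_isClosed hp h

end Support

section Risk

variable {d k m : ℕ} {Y : Type*} [MeasurableSpace Y] {klDiv : Measure Y → Measure Y → ℝ≥0∞}
  {ν : (Fin k → ℝ) → Measure Y} {μ : Matrix (Fin k) (Fin m) ℝ → Measure (Fin d → ℝ)}
  {f g : (Fin d → ℝ) → Fin m → ℝ} {P : Measure (Matrix (Fin k) (Fin m) ℝ)}

theorem innerRisk_self (hkl_self : ∀ ρ, klDiv ρ ρ = 0) (W : Matrix (Fin k) (Fin m) ℝ) :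
    innerRisk klDiv ν μ f f W W = 0 := by
  simp [innerRisk, hkl_self]

theorem feasibleExpected_self (hf : Continuous f) (hkl_self : ∀ ρ, klDiv ρ ρ = 0) :
    FeasibleExpected klDiv ν μ f P f id :=
  ⟨hf, fun W _ _ => (innerRisk_self hkl_self W).trans_le zero_le, le_rfl⟩

theorem outerObj_self (hkl_self : ∀ ρ, klDiv ρ ρ = 0) : outerObj klDiv ν μ f P f id = 0 := by
  simp [outerObj, innerRisk_self hkl_self]

theorem mulVec_eq_of_innerRisk_eq_zero (hkl_id : ∀ η η', klDiv (ν η) (ν η') = 0 → η = η')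
    (hf : Continuous f) (hg : Continuous g) {Wt W : Matrix (Fin k) (Fin m) ℝ}
    (hmeas : Measurable fun x => klDiv (ν (W *ᵥ f x)) (ν (Wt *ᵥ g x)))
    (h : innerRisk klDiv ν μ f g Wt W = 0) : ∀ x ∈ msupport (μ W), W *ᵥ f x = Wt *ᵥ g x := by
  refine forall_mem_msupport_of_ae
    (isClosed_eq (continuous_const.matrix_mulVec hf) (continuous_const.matrix_mulVec hg)) ?_
  filter_upwards [(lintegral_eq_zero_iff hmeas).1 h] with x hx using hkl_id _ _ hx

theorem ae_mulVec_eq_of_outerObj_eq_zero (hkl_id : ∀ η η', klDiv (ν η) (ν η') = 0 → η = η')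
    (hf : Continuous f) (hg : Continuous g)
    {V : Matrix (Fin k) (Fin m) ℝ → Matrix (Fin k) (Fin m) ℝ}
    (hmeas_inner : ∀ Wt W : Matrix (Fin k) (Fin m) ℝ,
      Measurable fun x => klDiv (ν (W *ᵥ f x)) (ν (Wt *ᵥ g x)))
    (hmeas_outer : Measurable fun W => innerRisk klDiv ν μ f g (V W) W)
    {Xs : Set (Fin d → ℝ)} (hsupp : ∀ W ∈ msupport P, msupport (μ W) = Xs)
    (h : outerObj klDiv ν μ f P g V = 0) : ∀ᵐ W ∂P, ∀ x ∈ Xs, W *ᵥ f x = V W *ᵥ g x := by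
  filter_upwards [(lintegral_eq_zero_iff hmeas_outer).1 h, ae_mem_msupport P] with W hW hWP
  rw [← hsupp W hWP]
  exact mulVec_eq_of_innerRisk_eq_zero hkl_id hf hg (hmeas_inner _ _) hW

end Risk

theorem eq_mul_mul_inv_of_mulVec_eq {K l n : Type*} [Field K] [Fintype n] [DecidableEq n]
    {W V : Matrix l n K} {u v : n → n → K} (hu : IsUnit (of fun i t => u t i).det)
    (h : ∀ t, W *ᵥ u t = V *ᵥ v t) :
    W = V * ((of fun i t => v t i) * (of fun i t => u t i)⁻¹) := by
  have hWV : W * of (fun i t => u t i) = V * of fun i t => v t i := by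
    ext i t
    simpa [mul_apply, mulVec, dotProduct] using congrFun (h t) i
  rw [← Matrix.mul_assoc, ← hWV, Matrix.mul_assoc, mul_nonsing_inv _ hu, Matrix.mul_one]

section TaskSupport

variable {k m : ℕ} {P : Measure (Matrix (Fin k) (Fin m) ℝ)}
  {Ws : Fin m → Matrix (Fin k) (Fin m) ℝ} {idx : Fin m → Fin k}

theorem eq_zero_of_ae_mulVec_eq_zero (hWs : ∀ t, Ws t ∈ msupport P)
    (hli : LinearIndependent ℝ fun t => Ws t (idx t)) {u : Fin m → ℝ}
    (h : ∀ᵐ W ∂P, W *ᵥ u = 0) : u = 0 := by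
  have hclosed : IsClosed {W : Matrix (Fin k) (Fin m) ℝ | W *ᵥ u = 0} :=
    isClosed_eq (continuous_id.matrix_mulVec continuous_const) continuous_const
  have hrows : (of fun t => Ws t (idx t)) *ᵥ u = 0 :=
    funext fun t => congrFun (forall_mem_msupport_of_ae hclosed h _ (hWs t)) (idx t)
  exact mulVec_injective_iff_isUnit.2 (linearIndependent_rows_iff_isUnit.1 hli)
    (hrows.trans (mulVec_zero _).symm)

theorem isUnit_det_of_ae_eq_mul (hWs : ∀ t, Ws t ∈ msupport P)
    (hli : LinearIndependent ℝ fun t => Ws t (idx t)) {M : Matrix (Fin m) (Fin m) ℝ}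
    {V : Matrix (Fin k) (Fin m) ℝ → Matrix (Fin k) (Fin m) ℝ} (h : ∀ᵐ W ∂P, W = V W * M) :
    IsUnit M.det := by
  set R := LinearMap.range M.vecMulLinear
  have hclosed : IsClosed {W : Matrix (Fin k) (Fin m) ℝ | ∀ i, W i ∈ R} := by
    simp only [Set.ofPred_forall]
    exact isClosed_iInter fun i => R.closed_of_finiteDimensional.preimage (continuous_apply i)
  have hrows : ∀ᵐ W ∂P, ∀ i, W i ∈ R :=
    h.mono fun W hW i => ⟨V W i, by rw [congrFun hW i]; rfl⟩
  have hspan : Submodule.span ℝ (Set.range fun t => Ws t (idx t)) ≤ R :=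
    Submodule.span_le.2 <| Set.range_subset_iff.2 fun t =>
      forall_mem_msupport_of_ae hclosed hrows _ (hWs t) (idx t)
  rw [hli.span_eq_top_of_card_eq_finrank' (by simp), top_le_iff] at hspan
  exact (isUnit_iff_isUnit_det M).1 <|
    vecMul_surjective_iff_isUnit.1 (LinearMap.range_eq_top.1 hspan)

end TaskSupport

def Matrix.rowsSupport {ι κ R : Type*} [Zero R] (B : Matrix ι κ R) (S : Set ι) : Set κ :=
  ⋃ i ∈ S, Function.support (B i)

namespace Matrix

theorem rowsSupport_mono {ι κ R : Type*} [Zero R] (B : Matrix ι κ R) {S₁ S₂ : Set ι}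
    (h : S₁ ⊆ S₂) : B.rowsSupport S₁ ⊆ B.rowsSupport S₂ :=
  Set.biUnion_subset_biUnion_left h

theorem rowsSupport_union {ι κ R : Type*} [Zero R] (B : Matrix ι κ R) (S₁ S₂ : Set ι) :
    B.rowsSupport (S₁ ∪ S₂) = B.rowsSupport S₁ ∪ B.rowsSupport S₂ :=
  Set.biUnion_union _ _ _

variable {K n : Type*} [Field K] [Fintype n] [DecidableEq n] {B : Matrix n n K}

theorem ncard_le_ncard_rowsSupport (hB : IsUnit B.det) (S : Set n) :
    S.ncard ≤ (B.rowsSupport S).ncard := by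
  classical
  set T := B.rowsSupport S
  have hzero : ∀ i ∈ S, ∀ j ∉ T, B i j = 0 := fun i hi j hj =>
    by_contra fun h => hj (Set.mem_biUnion hi h)
  have hrows : LinearIndependent K fun i : S => B i :=
    (linearIndependent_rows_iff_isUnit.2 ((isUnit_iff_isUnit_det B).2 hB)).comp _
      Subtype.val_injective
  have hli : LinearIndependent K fun (i : S) (j : T) => B i j := by
    refine Fintype.linearIndependent_iff.2 fun c hc => Fintype.linearIndependent_iff.1 hrows c ?_
    funext j
    by_cases hj : j ∈ T
    · simpa using congrFun hc ⟨j, hj⟩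
    · simp [hzero _ (Subtype.prop _) j hj]
  simpa [← Nat.card_coe_set_eq, Nat.card_eq_fintype_card] using hli.fintype_card_le_finrank

theorem ncard_rowsSupport_union (hB : IsUnit B.det) {S₁ S₂ : Set n}
    (h₁ : (B.rowsSupport S₁).ncard = S₁.ncard) (h₂ : (B.rowsSupport S₂).ncard = S₂.ncard) :
    (B.rowsSupport (S₁ ∪ S₂)).ncard = (S₁ ∪ S₂).ncard := by
  refine le_antisymm ?_ (ncard_le_ncard_rowsSupport hB _)
  have hinter : (S₁ ∩ S₂).ncard ≤ (B.rowsSupport S₁ ∩ B.rowsSupport S₂).ncard :=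
    (ncard_le_ncard_rowsSupport hB _).trans <| Set.ncard_le_ncard <| Set.subset_inter
      (B.rowsSupport_mono Set.inter_subset_left) (B.rowsSupport_mono Set.inter_subset_right)
  have hT := Set.ncard_union_add_ncard_inter (B.rowsSupport S₁) (B.rowsSupport S₂)
  have hS := Set.ncard_union_add_ncard_inter S₁ S₂
  rw [rowsSupport_union]
  omega

theorem ncard_rowsSupport_biUnion (hB : IsUnit B.det) (𝒮 : Set (Set n))
    (h : ∀ S ∈ 𝒮, (B.rowsSupport S).ncard = S.ncard) :
    (B.rowsSupport (⋃ S ∈ 𝒮, S)).ncard = (⋃ S ∈ 𝒮, S).ncard := by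
  induction 𝒮, 𝒮.toFinite using Set.Finite.induction_on with
  | empty => simp [rowsSupport]
  | @insert S 𝒮 _ _ ih =>
    rw [Set.biUnion_insert]
    exact ncard_rowsSupport_union hB (h S (Set.mem_insert S 𝒮))
      (ih fun S' hS' => h S' (Set.mem_insert_of_mem S hS'))

theorem exists_perm_of_rowsSupport_compl_ne_univ (hB : IsUnit B.det)
    (h : ∀ j, B.rowsSupport {j}ᶜ ≠ Set.univ) :
    ∃ σ : Equiv.Perm n, (∀ i j, i ≠ j → B i (σ j) = 0) ∧ ∀ j, B j (σ j) ≠ 0 := by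
  choose c hc using fun j => (Set.ne_univ_iff_exists_notMem _).1 (h j)
  have hzero : ∀ i j, i ≠ j → B i (c j) = 0 := fun i j hij =>
    by_contra fun hne => hc j (Set.mem_biUnion hij hne)
  have hdiag : ∀ j, B j (c j) ≠ 0 := fun j hj =>
    hB.ne_zero (det_eq_zero_of_column_eq_zero (c j) fun i =>
      if hij : i = j then hij ▸ hj else hzero i j hij)
  have hinj : Function.Injective c := fun j j' hjj' =>
    by_contra fun hne => hdiag j (hjj' ▸ hzero j j' hne)
  exact ⟨Equiv.ofBijective c (Finite.injective_iff_bijective.1 hinj), hzero, hdiag⟩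

theorem inv_eq_diagonal_mul_of_perm (σ : Equiv.Perm n) (hzero : ∀ i j, i ≠ j → B i (σ j) = 0)
    (hdiag : ∀ j, B j (σ j) ≠ 0) :
    B⁻¹ = diagonal (fun l => (B (σ.symm l) l)⁻¹) * of fun l j => if σ.symm l = j then 1 else 0 := by
  refine inv_eq_right_inv ?_
  ext i j
  rw [mul_apply, Fintype.sum_eq_single (σ j) fun l hl => ?_]
  · by_cases hij : i = j
    · subst hij
      simp [hdiag i]
    · simp [hzero i j hij, hij]
  · have : σ.symm l ≠ j := fun h => hl (h ▸ (σ.apply_symm_apply l).symm)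
    simp [this]

end Matrix

theorem exists_isPermMatrix_inv_eq_diag_mul {m : ℕ} {B : Matrix (Fin m) (Fin m) ℝ}
    (hB : IsUnit B.det) (h : ∀ j, B.rowsSupport {j}ᶜ ≠ Set.univ) :
    ∃ Pmat D : Matrix (Fin m) (Fin m) ℝ,
      IsPermMatrix Pmat ∧ D.IsDiag ∧ IsUnit D.det ∧ B⁻¹ = D * Pmat := by
  obtain ⟨σ, hzero, hdiag⟩ := exists_perm_of_rowsSupport_compl_ne_univ hB h
  refine ⟨_, _, ⟨σ.symm, rfl⟩, isDiag_diagonal _, ?_, inv_eq_diagonal_mul_of_perm σ hzero hdiag⟩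
  rw [det_diagonal]
  refine isUnit_iff_ne_zero.2 (Finset.prod_ne_zero_iff.2 fun l _ => inv_ne_zero ?_)
  simpa using hdiag (σ.symm l)

section Sparsity

variable {k m : ℕ} {P : Measure (Matrix (Fin k) (Fin m) ℝ)} {B : Matrix (Fin m) (Fin m) ℝ}

theorem measurable_colSupp : Measurable (colSupp : Matrix (Fin k) (Fin m) ℝ → Set (Fin m)) :=
  measurable_set_iff.2 fun j => Measurable.exists fun i =>
    ((continuous_id.matrix_elem i j).measurable.eq_const 0).not

theorem measurable_colSparsity :
    Measurable (colSparsity : Matrix (Fin k) (Fin m) ℝ → ℕ) :=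
  (Measurable.of_discrete (f := Set.ncard)).comp measurable_colSupp

theorem colSparsity_le (W : Matrix (Fin k) (Fin m) ℝ) : colSparsity W ≤ m := by
  simpa [colSparsity] using Set.ncard_le_card (colSupp W)

theorem lintegral_colSparsity_ne_top [IsFiniteMeasure P] :
    ∫⁻ W, (colSparsity W : ℝ≥0∞) ∂P ≠ ⊤ :=
  ((lintegral_mono fun W => Nat.cast_le.2 (colSparsity_le W)).trans_lt
    (by simpa using ENNReal.mul_lt_top (ENNReal.natCast_lt_top m) (measure_lt_top P _))).ne

theorem mem_colSupp_mul_iff {W : Matrix (Fin k) (Fin m) ℝ} {j : Fin m} :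
    j ∈ colSupp (W * B) ↔ W *ᵥ (fun i => B i j) ≠ 0 := by
  simp [colSupp, funext_iff, mul_apply, mulVec, dotProduct]

theorem mulVec_indicator_colSupp (W : Matrix (Fin k) (Fin m) ℝ) (v : Fin m → ℝ) :
    W *ᵥ (colSupp W).indicator v = W *ᵥ v := by
  ext i
  simp only [mulVec, dotProduct]
  refine Finset.sum_congr rfl fun j _ => ?_
  by_cases hj : j ∈ colSupp W
  · simp [hj]
  · simp only [colSupp, Set.mem_ofPred_eq, not_exists, not_not] at hj
    simp [hj]

theorem ae_rowsSupport_colSupp_subset_colSupp_mul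
    (hA6 : ∀ S : Set (Fin m), 0 < P {W | colSupp W = S} →
      ∀ a : Fin m → ℝ, a ≠ 0 → {j | a j ≠ 0} ⊆ S →
        P ({W | W.mulVec a = 0} ∩ {W | colSupp W = S}) = 0) :
    ∀ᵐ W ∂P, B.rowsSupport (colSupp W) ⊆ colSupp (W * B) := by
  suffices h : ∀ S, ∀ᵐ W ∂P, colSupp W = S → B.rowsSupport S ⊆ colSupp (W * B) by
    filter_upwards [ae_all_iff.2 h] with W hW using hW _ rfl
  intro S
  rcases eq_zero_or_pos (P {W | colSupp W = S}) with hS | hS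
  · filter_upwards [measure_eq_zero_iff_ae_notMem.1 hS] with W hW hWS using absurd hWS hW
  suffices h : ∀ j ∈ B.rowsSupport S, ∀ᵐ W ∂P, colSupp W = S → j ∈ colSupp (W * B) by
    simp only [← Filter.eventually_all_finite (Set.toFinite _)] at h
    filter_upwards [h] with W hW hWS j hj using hW j hj hWS
  intro j hj
  -- on `{colSupp W = S}`, column `j` of `W * B` is `W` applied to column `j` of `B` cut down
  -- to `S`, a nonzero vector supported in `S`
  have ha : S.indicator (fun i => B i j) ≠ 0 := by
    obtain ⟨i, hi, hij⟩ := Set.mem_iUnion₂.1 hj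
    exact fun h0 => hij (by simpa [hi] using congrFun h0 i)
  have hnull := hA6 S hS _ ha fun i hi => by_contra fun hiS => hi (Set.indicator_of_notMem hiS _)
  filter_upwards [measure_eq_zero_iff_ae_notMem.1 hnull] with W hW hWS
  rw [mem_colSupp_mul_iff, ← mulVec_indicator_colSupp, hWS]
  exact fun h0 => hW ⟨h0, hWS⟩

theorem ncard_rowsSupport_eq_of_lintegral_colSparsity_le [IsFiniteMeasure P]
    (hA6 : ∀ S : Set (Fin m), 0 < P {W | colSupp W = S} →
      ∀ a : Fin m → ℝ, a ≠ 0 → {j | a j ≠ 0} ⊆ S →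
        P ({W | W.mulVec a = 0} ∩ {W | colSupp W = S}) = 0)
    (hB : IsUnit B.det)
    (hsp : ∫⁻ W, (colSparsity (W * B) : ℝ≥0∞) ∂P ≤ ∫⁻ W, (colSparsity W : ℝ≥0∞) ∂P)
    {S : Set (Fin m)} (hS : 0 < P {W | colSupp W = S}) :
    (B.rowsSupport S).ncard = S.ncard := by
  have hsub := ae_rowsSupport_colSupp_subset_colSupp_mul (B := B) hA6
  have hle : (fun W => (colSparsity W : ℝ≥0∞)) ≤ᵐ[P] fun W => (colSparsity (W * B) : ℝ≥0∞) :=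
    hsub.mono fun W hW => Nat.cast_le.2 <|
      (ncard_le_ncard_rowsSupport hB _).trans (Set.ncard_le_ncard hW)
  have heq := ae_eq_of_ae_le_of_lintegral_le hle lintegral_colSparsity_ne_top
    (measurable_from_nat.comp (measurable_colSparsity.comp
      (continuous_id.matrix_mul continuous_const).measurable)).aemeasurable hsp
  obtain ⟨W, hWS, hWeq, hW⟩ :=
    Measure.exists_mem_of_measure_ne_zero_of_ae hS.ne' (ae_restrict_of_ae (heq.and hsub))
  refine le_antisymm ?_ (ncard_le_ncard_rowsSupport hB S)
  calc (B.rowsSupport S).ncard ≤ colSparsity (W * B) := hWS ▸ Set.ncard_le_ncard hW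
    _ = colSparsity W := (Nat.cast_inj.1 hWeq).symm
    _ = S.ncard := by rw [colSparsity, hWS]

theorem rowsSupport_compl_singleton_ne_univ [IsFiniteMeasure P]
    (hA6 : ∀ S : Set (Fin m), 0 < P {W | colSupp W = S} →
      ∀ a : Fin m → ℝ, a ≠ 0 → {j | a j ≠ 0} ⊆ S →
        P ({W | W.mulVec a = 0} ∩ {W | colSupp W = S}) = 0)
    (hA7 : ∀ j : Fin m,
      (⋃ S ∈ {S : Set (Fin m) | 0 < P {W | colSupp W = S} ∧ j ∉ S}, S) =
        ({j}ᶜ : Set (Fin m)))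
    (hB : IsUnit B.det)
    (hsp : ∫⁻ W, (colSparsity (W * B) : ℝ≥0∞) ∂P ≤ ∫⁻ W, (colSparsity W : ℝ≥0∞) ∂P)
    (j : Fin m) : B.rowsSupport {j}ᶜ ≠ Set.univ := by
  have htight : (B.rowsSupport {j}ᶜ).ncard = ({j}ᶜ : Set (Fin m)).ncard := by
    rw [← hA7 j]
    exact ncard_rowsSupport_biUnion hB _ fun S hS =>
      ncard_rowsSupport_eq_of_lintegral_colSparsity_le hA6 hB hsp hS.1
  intro huniv
  rw [huniv] at htight
  have hproper : ({j}ᶜ : Set (Fin m)) ⊂ Set.univ :=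
    Set.ssubset_univ_iff.2 (Set.compl_ne_univ.2 (Set.singleton_nonempty j))
  exact (Set.ncard_lt_ncard hproper).ne' htight

end Sparsity

theorem sparse_multitask_learning_disentangles_expected_general
    (Xs : Set (Fin d → ℝ))
    (f : (Fin d → ℝ) → Fin m → ℝ) (hf : Continuous f)
    (P : Measure (Matrix (Fin k) (Fin m) ℝ)) [IsProbabilityMeasure P]
    (μ : Matrix (Fin k) (Fin m) ℝ → Measure (Fin d → ℝ))
    (hμsupp : ∀ W ∈ msupport P, msupport (μ W) = Xs)
    (ν : (Fin k → ℝ) → Measure Y)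
    (klDiv : Measure Y → Measure Y → ℝ≥0∞)
    (hkl_self : ∀ ρ : Measure Y, klDiv ρ ρ = 0)
    (hkl_id : ∀ η η' : Fin k → ℝ, klDiv (ν η) (ν η') = 0 → η = η')
    (hmeas_inner : ∀ g : (Fin d → ℝ) → Fin m → ℝ, Continuous g →
      ∀ Wt W : Matrix (Fin k) (Fin m) ℝ,
        Measurable fun x => klDiv (ν (W.mulVec (f x))) (ν (Wt.mulVec (g x))))
    (hA4 : ∃ xs : Fin m → (Fin d → ℝ), (∀ t, xs t ∈ Xs) ∧
      IsUnit (Matrix.of fun i t => f (xs t) i).det)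
    (hA5 : ∃ (Ws : Fin m → Matrix (Fin k) (Fin m) ℝ) (idx : Fin m → Fin k),
      (∀ t, Ws t ∈ msupport P) ∧
      LinearIndependent ℝ fun t => Ws t (idx t))
    (hA6 : ∀ S : Set (Fin m), 0 < P {W | colSupp W = S} →
      ∀ a : Fin m → ℝ, a ≠ 0 → {j | a j ≠ 0} ⊆ S →
        P ({W | W.mulVec a = 0} ∩ {W | colSupp W = S}) = 0)
    (hA7 : ∀ j : Fin m,
      (⋃ S ∈ {S : Set (Fin m) | 0 < P {W | colSupp W = S} ∧ j ∉ S}, S) =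
        ({j}ᶜ : Set (Fin m)))
    (fhat : (Fin d → ℝ) → Fin m → ℝ) (hfhat : Continuous fhat)
    (What : Matrix (Fin k) (Fin m) ℝ → Matrix (Fin k) (Fin m) ℝ)
    (hfeas : FeasibleExpected klDiv ν μ f P fhat What)
    (hmeas_outer : Measurable fun W => innerRisk klDiv ν μ f fhat (What W) W)
    (hopt : ∀ (g : (Fin d → ℝ) → Fin m → ℝ)
        (V : Matrix (Fin k) (Fin m) ℝ → Matrix (Fin k) (Fin m) ℝ),
      FeasibleExpected klDiv ν μ f P g V →
        outerObj klDiv ν μ f P fhat What ≤ outerObj klDiv ν μ f P g V) :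
    ∃ (Pmat D : Matrix (Fin m) (Fin m) ℝ),
      IsPermMatrix Pmat ∧ D.IsDiag ∧ IsUnit D.det ∧
      ∀ x ∈ Xs, fhat x = (D * Pmat).mulVec (f x) := by
  obtain ⟨xs, hxs, hF⟩ := hA4
  obtain ⟨Ws, idx, hWs, hli⟩ := hA5
  have hJ : outerObj klDiv ν μ f P fhat What = 0 := le_antisymm
    ((hopt f id (feasibleExpected_self hf hkl_self)).trans_eq (outerObj_self hkl_self)) zero_le
  have hfit := ae_mulVec_eq_of_outerObj_eq_zero hkl_id hf hfhat (hmeas_inner fhat hfhat)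
    hmeas_outer hμsupp hJ
  set M := (of fun i t => fhat (xs t) i) * (of fun i t => f (xs t) i)⁻¹
  have hWM : ∀ᵐ W ∂P, W = What W * M :=
    hfit.mono fun W hW => eq_mul_mul_inv_of_mulVec_eq hF fun t => hW _ (hxs t)
  have hM : IsUnit M.det := isUnit_det_of_ae_eq_mul hWs hli hWM
  have hWhat : ∀ᵐ W ∂P, What W = W * M⁻¹ := hWM.mono fun W hW => by
    rw [congrArg (· * M⁻¹) hW, Matrix.mul_assoc, mul_nonsing_inv _ hM, Matrix.mul_one]
  have hfhat_eq : ∀ x ∈ Xs, M⁻¹ *ᵥ fhat x = f x := fun x hx =>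
    sub_eq_zero.1 <| eq_zero_of_ae_mulVec_eq_zero hWs hli <| by
      filter_upwards [hfit, hWhat] with W hW hV
      rw [mulVec_sub, mulVec_mulVec, ← hV, hW x hx, sub_self]
  have hsp : ∫⁻ W, (colSparsity (W * M⁻¹) : ℝ≥0∞) ∂P ≤ ∫⁻ W, (colSparsity W : ℝ≥0∞) ∂P :=
    (lintegral_congr_ae (hWhat.mono fun W hW => by rw [hW])).symm.trans_le hfeas.2.2
  have hMinv : IsUnit M⁻¹.det := isUnit_nonsing_inv_det M hM
  obtain ⟨Pmat, D, hPmat, hD, hDdet, hinv⟩ := exists_isPermMatrix_inv_eq_diag_mul hMinv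
    (rowsSupport_compl_singleton_ne_univ hA6 hA7 hMinv hsp)
  rw [nonsing_inv_nonsing_inv M hM] at hinv
  refine ⟨Pmat, D, hPmat, hD, hDdet, fun x hx => ?_⟩
  rw [← hinv, ← hfhat_eq x hx, mulVec_mulVec, mul_nonsing_inv _ hM, one_mulVec]

/-- **Sparse multi-task learning yields disentanglement (expected sparsity constraint,
Theorem B.5).**  Let `Xs ⊆ ℝ^d` be nonempty, `f : ℝ^d → ℝ^m` continuous, `k, m ≥ 1`, `P` a
Borel probability measure on `ℝ^{k×m}` with support `𝒲 = msupport P`, and for each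
`W ∈ 𝒲` let `μ W` be a Borel probability measure on `ℝ^d` with topological support `Xs`.
Let `η ↦ ν η` be a KL-identifiable family of probability measures (`klDiv` is the
Kullback–Leibler divergence, `ℝ≥0∞`-valued, with `klDiv ρ ρ = 0`), with all KL integrands
measurable.  Under assumptions (A4)–(A7), if `(f̂, Ŵ)` is feasible (inner minimization
is unconstrained, and the sparsity constraint holds in expectation over tasks) with `f̂`
continuous and its outer value is minimal among all feasible pairs, then `f̂` is disentangled
w.r.t. `f`: there are a permutation matrix `Π` and an invertible diagonal matrix `D`
such that `f̂ x = (D Π) (f x)` for all `x ∈ Xs`. -/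
theorem sparse_multitask_learning_disentangles_expected
    (hk : 1 ≤ k) (hm : 1 ≤ m)
    (Xs : Set (Fin d → ℝ)) (hXs : Xs.Nonempty)
    (f : (Fin d → ℝ) → Fin m → ℝ) (hf : Continuous f)
    (P : Measure (Matrix (Fin k) (Fin m) ℝ)) [IsProbabilityMeasure P]
    (μ : Matrix (Fin k) (Fin m) ℝ → Measure (Fin d → ℝ))
    (hμprob : ∀ W ∈ msupport P, IsProbabilityMeasure (μ W))
    (hμsupp : ∀ W ∈ msupport P, msupport (μ W) = Xs)
    (ν : (Fin k → ℝ) → Measure Y) [∀ η, IsProbabilityMeasure (ν η)]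
    (klDiv : Measure Y → Measure Y → ℝ≥0∞)
    (hkl_self : ∀ ρ : Measure Y, klDiv ρ ρ = 0)
    (hkl_id : ∀ η η' : Fin k → ℝ, klDiv (ν η) (ν η') = 0 → η = η')
    (hmeas_inner : ∀ g : (Fin d → ℝ) → Fin m → ℝ, Continuous g →
      ∀ Wt W : Matrix (Fin k) (Fin m) ℝ,
        Measurable fun x => klDiv (ν (W.mulVec (f x))) (ν (Wt.mulVec (g x))))
    (hA4 : ∃ xs : Fin m → (Fin d → ℝ), (∀ t, xs t ∈ Xs) ∧
      IsUnit (Matrix.of fun i t => f (xs t) i).det)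
    (hA5 : ∃ (Ws : Fin m → Matrix (Fin k) (Fin m) ℝ) (idx : Fin m → Fin k),
      (∀ t, Ws t ∈ msupport P) ∧
      LinearIndependent ℝ fun t => Ws t (idx t))
    (hA6 : ∀ S : Set (Fin m), 0 < P {W | colSupp W = S} →
      ∀ a : Fin m → ℝ, a ≠ 0 → {j | a j ≠ 0} ⊆ S →
        P ({W | W.mulVec a = 0} ∩ {W | colSupp W = S}) = 0)
    (hA7 : ∀ j : Fin m,
      (⋃ S ∈ {S : Set (Fin m) | 0 < P {W | colSupp W = S} ∧ j ∉ S}, S) =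
        ({j}ᶜ : Set (Fin m)))
    (fhat : (Fin d → ℝ) → Fin m → ℝ) (hfhat : Continuous fhat)
    (What : Matrix (Fin k) (Fin m) ℝ → Matrix (Fin k) (Fin m) ℝ)
    (hfeas : FeasibleExpected klDiv ν μ f P fhat What)
    (hmeas_outer : Measurable fun W => innerRisk klDiv ν μ f fhat (What W) W)
    (hopt : ∀ (g : (Fin d → ℝ) → Fin m → ℝ)
        (V : Matrix (Fin k) (Fin m) ℝ → Matrix (Fin k) (Fin m) ℝ),
      FeasibleExpected klDiv ν μ f P g V →
        outerObj klDiv ν μ f P fhat What ≤ outerObj klDiv ν μ f P g V) :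
    ∃ (Pmat D : Matrix (Fin m) (Fin m) ℝ),
      IsPermMatrix Pmat ∧ D.IsDiag ∧ IsUnit D.det ∧
      ∀ x ∈ Xs, fhat x = (D * Pmat).mulVec (f x) :=
  sparse_multitask_learning_disentangles_expected_general Xs f hf P μ hμsupp ν klDiv hkl_self hkl_id
    hmeas_inner hA4 hA5 hA6 hA7 fhat hfhat What hfeas hmeas_outer hopt
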